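/- arXiv:1712.06741 — 2 statements merged into one kernel-verified Lean document; each statement's English description precedes it below -/
import Mathlib

section
/- Let S = <a, a+d, ..., a+wd> with gcd(a,d)=1 and 1 < w < a. Let S_r denote S with the generator a+rd omitted. Then the set of length sets satisfies L(S_r) = L(S) if and only if 1 < r < w−1. -/
/-- Membership in the numerical monoid generated by `a + i*d` for `0 ≤ i ≤ w`
with the generators indexed by `G` omitted (`G = ∅` gives the full arithmetical monoid). -/
def AMem (a d w : ℕ) (G : Set ℕ) (n : ℤ) : Prop :=
  ∃ z : Fin (w + 1) → ℕ, (∀ i : Fin (w + 1), (i : ℕ) ∈ G → z i = 0) ∧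
    n = ∑ i : Fin (w + 1), (z i : ℤ) * ((a : ℤ) + ((i : ℕ) : ℤ) * (d : ℤ))

/-- The set of factorization lengths of `n` over the generators `a + i*d`, `0 ≤ i ≤ w`,
with the generators indexed by `G` omitted. -/
def ALen (a d w : ℕ) (G : Set ℕ) (n : ℤ) : Set ℤ :=
  {ℓ | ∃ z : Fin (w + 1) → ℕ, (∀ i : Fin (w + 1), (i : ℕ) ∈ G → z i = 0) ∧
    n = ∑ i : Fin (w + 1), (z i : ℤ) * ((a : ℤ) + ((i : ℕ) : ℤ) * (d : ℤ)) ∧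
    (∑ i : Fin (w + 1), (z i : ℤ)) = ℓ}

/-- The set of length sets. -/
def ALenSets (a d w : ℕ) (G : Set ℕ) : Set (Set ℤ) :=
  {L | ∃ n : ℤ, AMem a d w G n ∧ L = ALen a d w G n}

/-- Reachability of a pair (length ℓ, weight t). -/
def Reach (w : ℕ) (G : Set ℕ) (ℓ t : ℕ) : Prop :=
  ∃ z : Fin (w + 1) → ℕ, (∀ i : Fin (w + 1), (i : ℕ) ∈ G → z i = 0) ∧
    (∑ i, z i) = ℓ ∧ (∑ i : Fin (w+1), (i : ℕ) * z i) = t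

lemma reach_zero (w : ℕ) (G : Set ℕ) : Reach w G 0 0 :=
  ⟨fun _ => 0, fun _ _ => rfl, by simp, by simp⟩

lemma reach_step {w : ℕ} {G : Set ℕ} {ℓ t : ℕ} (h : Reach w G ℓ t) {p : ℕ}
    (hp : p ≤ w) (hpG : p ∉ G) : Reach w G (ℓ + 1) (t + p) := by
  obtain ⟨z, hz, hl, ht⟩ := h
  set e : Fin (w+1) → ℕ := Pi.single (⟨p, by omega⟩ : Fin (w+1)) 1 with he
  have hesum : (∑ i, e i) = 1 := by
    rw [he, Finset.sum_pi_single']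
    simp
  have hewsum : (∑ i : Fin (w+1), (i:ℕ) * e i) = p := by
    rw [he]
    simp only [Pi.single_apply, mul_ite, mul_one, mul_zero]
    rw [Finset.sum_ite_eq']
    simp
  refine ⟨z + e, ?_, ?_, ?_⟩
  · intro i hi
    have h1 : z i = 0 := hz i hi
    have h2 : e i = 0 := by
      rw [he, Pi.single_apply, if_neg]
      intro h'
      apply hpG
      have : (i : ℕ) = p := by rw [h']
      rwa [this] at hi
    simp [Pi.add_apply, h1, h2]
  · simp only [Pi.add_apply]
    rw [Finset.sum_add_distrib, hl, hesum]
  · simp only [Pi.add_apply, Nat.mul_add]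
    rw [Finset.sum_add_distrib, ht, hewsum]

lemma reach_single {w : ℕ} {G : Set ℕ} {p : ℕ} (hp : p ≤ w) (hpG : p ∉ G) :
    Reach w G 1 p := by
  simpa using reach_step (reach_zero w G) hp hpG

lemma reach_bound {w : ℕ} {G : Set ℕ} {ℓ t : ℕ} (h : Reach w G ℓ t) : t ≤ w * ℓ := by
  obtain ⟨z, _, hl, ht⟩ := h
  rw [← hl, ← ht, Finset.mul_sum]
  exact Finset.sum_le_sum fun i _ => Nat.mul_le_mul_right _ (by omega : (i:ℕ) ≤ w)

lemma sum_eq (a d w : ℕ) (z : Fin (w+1) → ℕ) :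
    ∑ i : Fin (w + 1), (z i : ℤ) * ((a : ℤ) + ((i : ℕ) : ℤ) * (d : ℤ))
      = ((∑ i, z i : ℕ) : ℤ) * a + ((∑ i : Fin (w+1), (i : ℕ) * z i : ℕ) : ℤ) * d := by
  push_cast
  rw [Finset.sum_mul, Finset.sum_mul, ← Finset.sum_add_distrib]
  exact Finset.sum_congr rfl fun i _ => by ring

lemma cast_sum_eq (w : ℕ) (z : Fin (w+1) → ℕ) :
    (∑ i : Fin (w+1), (z i : ℤ)) = ((∑ i, z i : ℕ) : ℤ) := by push_cast; rfl

lemma mem_ALen {a d w : ℕ} {G : Set ℕ} {ℓ t : ℕ} {n : ℤ} (h : Reach w G ℓ t)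
    (hn : n = (ℓ : ℤ) * a + (t : ℤ) * d) : (ℓ : ℤ) ∈ ALen a d w G n := by
  obtain ⟨z, hz, hl, ht⟩ := h
  exact ⟨z, hz, by rw [sum_eq, hl, ht]; exact hn, by rw [cast_sum_eq, hl]⟩

lemma ALen_elim {a d w : ℕ} {G : Set ℕ} {n x : ℤ} (hx : x ∈ ALen a d w G n) :
    ∃ ℓ t : ℕ, Reach w G ℓ t ∧ x = (ℓ : ℤ) ∧ n = (ℓ : ℤ) * a + (t : ℤ) * d := by
  obtain ⟨z, hz, hn, hs⟩ := hx
  refine ⟨∑ i, z i, ∑ i : Fin (w+1), (i:ℕ) * z i, ⟨z, hz, rfl, rfl⟩, ?_, ?_⟩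
  · rw [← hs, cast_sum_eq]
  · rw [hn, sum_eq]

lemma AMem_of_reach {a d w : ℕ} {G : Set ℕ} {ℓ t : ℕ} {n : ℤ} (h : Reach w G ℓ t)
    (hn : n = (ℓ : ℤ) * a + (t : ℤ) * d) : AMem a d w G n := by
  obtain ⟨z, hz, hl, ht⟩ := h
  exact ⟨z, hz, by rw [sum_eq, hl, ht]; exact hn⟩

lemma AMem_elim {a d w : ℕ} {G : Set ℕ} {n : ℤ} (h : AMem a d w G n) :
    ∃ ℓ t : ℕ, Reach w G ℓ t ∧ n = (ℓ : ℤ) * a + (t : ℤ) * d := by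
  obtain ⟨z, hz, hn⟩ := h
  exact ⟨∑ i, z i, ∑ i : Fin (w+1), (i:ℕ) * z i, ⟨z, hz, rfl, rfl⟩, by rw [hn, sum_eq]⟩

/-- Key arithmetic lemma. -/
lemma key {a d : ℤ} (hco : IsCoprime a d) (ha : 0 < a) {ℓ0 t0 ℓ t : ℤ}
    (h : ℓ0 * a + t0 * d = ℓ * a + t * d) : ∃ k : ℤ, t = t0 + k * a ∧ ℓ = ℓ0 - k * d := by
  have hdvd : a ∣ (t - t0) := by
    have : a ∣ (t - t0) * d := ⟨ℓ0 - ℓ, by linear_combination -h⟩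
    exact hco.dvd_of_dvd_mul_right this
  obtain ⟨k, hk⟩ := hdvd
  refine ⟨k, by linear_combination hk, ?_⟩
  have h2 : a * (ℓ - ℓ0 + k * d) = 0 := by linear_combination -h - d * hk
  have h3 := (mul_eq_zero.mp h2).resolve_left (by positivity)
  linarith

lemma not_mem_singleton_nat {p r : ℕ} (h : p ≠ r) : p ∉ ({r} : Set ℕ) := by
  simp [h]

lemma reach_all {w : ℕ} : ∀ ℓ t : ℕ, t ≤ w * ℓ → Reach w ∅ ℓ t := by
  intro ℓ
  induction ℓ with
  | zero => intro t ht; have : t = 0 := by omega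
            rw [this]; exact reach_zero w ∅
  | succ ℓ ih =>
    intro t ht
    have hms : w * (ℓ + 1) = w * ℓ + w := Nat.mul_succ w ℓ
    rcases le_or_gt t w with h | h
    · have := reach_step (ih 0 (by omega)) (le_refl w |>.trans (le_refl w) |> fun _ => (show t ≤ w from h)) (Set.notMem_empty t)
      simpa using this
    · have := reach_step (ih (t - w) (by omega)) (le_refl w) (Set.notMem_empty w)
      have h2 : t - w + w = t := by omega
      rwa [h2] at this

lemma wl_lb {w ℓ : ℕ} (h : 1 ≤ ℓ) : w ≤ w * ℓ := Nat.le_mul_of_pos_right w h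

lemma reach_avoid1 {w : ℕ} (hw : 3 ≤ w) : ∀ ℓ t : ℕ, t ≤ w * ℓ → t ≠ 1 → Reach w ({1} : Set ℕ) ℓ t := by
  intro ℓ
  induction ℓ with
  | zero => intro t ht _; have : t = 0 := by omega
            rw [this]; exact reach_zero _ _
  | succ ℓ ih =>
    intro t ht ht1
    have hms : w * (ℓ + 1) = w * ℓ + w := Nat.mul_succ w ℓ
    rcases le_or_gt t w with h | h
    · have := reach_step (ih 0 (by omega) (by omega)) h (not_mem_singleton_nat ht1)
      simpa using this
    · have hl : 1 ≤ ℓ := by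
        rcases Nat.eq_zero_or_pos ℓ with h' | h'
        · subst h'; simp at ht; omega
        · exact h'
      have hwl : w ≤ w * ℓ := wl_lb hl
      rcases eq_or_ne t (w + 1) with h2 | h2
      · have := reach_step (ih 2 (by omega) (by omega)) (show w - 1 ≤ w by omega)
          (not_mem_singleton_nat (by omega))
        have h3 : 2 + (w - 1) = t := by omega
        rwa [h3] at this
      · have := reach_step (ih (t - w) (by omega) (by omega)) (le_refl w) (not_mem_singleton_nat (by omega))
        have h3 : t - w + w = t := by omega
        rwa [h3] at this

lemma reach_avoidw1 {w : ℕ} (hw : 3 ≤ w) : ∀ ℓ t : ℕ, t ≤ w * ℓ → t + 1 ≠ w * ℓ →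
    Reach w ({w - 1} : Set ℕ) ℓ t := by
  intro ℓ
  induction ℓ with
  | zero => intro t ht _; have : t = 0 := by omega
            rw [this]; exact reach_zero _ _
  | succ ℓ ih =>
    intro t ht ht1
    have hms : w * (ℓ + 1) = w * ℓ + w := Nat.mul_succ w ℓ
    have hz0 : w * ℓ = 0 ∨ w ≤ w * ℓ := by
      rcases Nat.eq_zero_or_pos ℓ with h' | h'
      · left; rw [h', mul_zero]
      · right; exact wl_lb h'
    rcases le_or_gt w t with h | h
    · have := reach_step (ih (t - w) (by omega) (by omega)) (le_refl w)
        (not_mem_singleton_nat (by omega))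
      have h3 : t - w + w = t := by omega
      rwa [h3] at this
    · rcases eq_or_ne t (w - 1) with h2 | h2
      · have hl : 1 ≤ ℓ := by
          rcases Nat.eq_zero_or_pos ℓ with h' | h'
          · subst h'; simp at ht1 ht; omega
          · exact h'
        have hwl : w ≤ w * ℓ := wl_lb hl
        have := reach_step (ih 1 (by omega) (by omega)) (show w - 2 ≤ w by omega)
          (not_mem_singleton_nat (by omega))
        have h3 : 1 + (w - 2) = t := by omega
        rwa [h3] at this
      · have := reach_step (ih 0 (by omega) (by omega)) (show t ≤ w by omega)
          (not_mem_singleton_nat (by omega))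
        simpa using this

lemma reach_avoidr {w r : ℕ} (hr2 : 2 ≤ r) (hrw : r + 2 ≤ w) : ∀ ℓ t : ℕ, t ≤ w * ℓ →
    ¬(ℓ = 1 ∧ t = r) → Reach w ({r} : Set ℕ) ℓ t := by
  intro ℓ
  induction ℓ with
  | zero => intro t ht _; have : t = 0 := by omega
            rw [this]; exact reach_zero _ _
  | succ ℓ ih =>
    intro t ht hex
    have hms : w * (ℓ + 1) = w * ℓ + w := Nat.mul_succ w ℓ
    rcases Nat.eq_zero_or_pos ℓ with h0 | h0
    · subst h0
      have htw : t ≤ w := by omega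
      have htr : t ≠ r := fun hc => hex ⟨rfl, hc⟩
      have := reach_step (reach_zero w _) htw (not_mem_singleton_nat htr)
      simpa using this
    · have hwl : w ≤ w * ℓ := wl_lb h0
      rcases le_or_gt t w with h | h
      · rcases eq_or_ne t r with h2 | h2
        · have := reach_step (ih (r - 1) (by omega) (by omega)) (show 1 ≤ w by omega)
            (not_mem_singleton_nat (by omega))
          have h3 : r - 1 + 1 = t := by omega
          rwa [h3] at this
        · have := reach_step (ih 0 (by omega) (by omega)) h (not_mem_singleton_nat h2)
          simpa using this
      · by_cases h2 : ℓ = 1 ∧ t - w = r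
        · obtain ⟨hℓ1, htw⟩ := h2
          have hwl1 : w * ℓ = w := by rw [hℓ1, mul_one]
          have := reach_step (ih (r + 1) (by omega) (by omega)) (show w - 1 ≤ w by omega)
            (not_mem_singleton_nat (by omega))
          have h3 : r + 1 + (w - 1) = t := by omega
          rwa [h3] at this
        · have := reach_step (ih (t - w) (by omega) h2) (le_refl w)
            (not_mem_singleton_nat (by omega))
          have h3 : t - w + w = t := by omega
          rwa [h3] at this

lemma reach2_even {ℓ s : ℕ} (h : s ≤ ℓ) : Reach 2 ({1} : Set ℕ) ℓ (2 * s) := by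
  induction ℓ generalizing s with
  | zero => have : s = 0 := by omega
            subst this; exact reach_zero _ _
  | succ ℓ ih =>
    rcases Nat.eq_zero_or_pos s with h0 | h0
    · subst h0
      have := reach_step (ih (show 0 ≤ ℓ by omega)) (show 0 ≤ 2 by omega)
        (not_mem_singleton_nat (by omega))
      simpa using this
    · have := reach_step (ih (show s - 1 ≤ ℓ by omega)) (le_refl 2)
        (not_mem_singleton_nat (by omega))
      have h3 : 2 * (s - 1) + 2 = 2 * s := by omega
      rwa [h3] at this

lemma reach_t_ne_one {w ℓ t : ℕ} (h : Reach w ({1} : Set ℕ) ℓ t) : t ≠ 1 := by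
  obtain ⟨z, hz, _, ht⟩ := h
  intro hc
  by_cases hall : ∀ i : Fin (w+1), 2 ≤ (i:ℕ) → z i = 0
  · have : (∑ i : Fin (w+1), (i:ℕ) * z i) = 0 := by
      apply Finset.sum_eq_zero
      intro i _
      rcases Nat.lt_or_ge (i:ℕ) 2 with h2 | h2
      · interval_cases h' : (i : ℕ)
        · simp
        · rw [hz i (by simp [h']), mul_zero]
      · rw [hall i h2, mul_zero]
    omega
  · push_neg at hall
    obtain ⟨i, hi2, hiz⟩ := hall
    have : (i:ℕ) * z i ≤ ∑ j : Fin (w+1), (j:ℕ) * z j :=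
      Finset.single_le_sum (f := fun j : Fin (w+1) => (j:ℕ) * z j) (fun j _ => Nat.zero_le _) (Finset.mem_univ i)
    have h2 : 2 ≤ (i:ℕ) * z i := by
      calc 2 = 2 * 1 := by omega
      _ ≤ (i:ℕ) * z i := Nat.mul_le_mul hi2 (by omega)
    omega

lemma reach_w1_struct {w ℓ t : ℕ} (hw : 2 ≤ w) (h : Reach w ({w - 1} : Set ℕ) ℓ t) :
    t + 1 ≠ w * ℓ := by
  obtain ⟨z, hz, hl, ht⟩ := h
  intro hc
  have hsplit : (∑ i : Fin (w+1), (i:ℕ) * z i) + (∑ i : Fin (w+1), (w - (i:ℕ)) * z i)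
      = w * ℓ := by
    rw [← hl, Finset.mul_sum, ← Finset.sum_add_distrib]
    apply Finset.sum_congr rfl
    intro i _
    have : (i:ℕ) ≤ w := by omega
    have : (i:ℕ) + (w - (i:ℕ)) = w := by omega
    calc (i:ℕ) * z i + (w - (i:ℕ)) * z i = ((i:ℕ) + (w - (i:ℕ))) * z i := by ring
    _ = w * z i := by rw [this]
  have hu1 : (∑ i : Fin (w+1), (w - (i:ℕ)) * z i) = 1 := by omega
  by_cases hall : ∀ i : Fin (w+1), (i:ℕ) + 2 ≤ w → z i = 0
  · have : (∑ i : Fin (w+1), (w - (i:ℕ)) * z i) = 0 := by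
      apply Finset.sum_eq_zero
      intro i _
      rcases Nat.lt_or_ge ((i:ℕ) + 2) w with h2 | h2
      · rw [hall i (by omega), mul_zero]
      · rcases Nat.lt_or_ge (i:ℕ) w with h3 | h3
        · rcases Nat.lt_or_ge (i:ℕ) (w-1) with h4 | h4
          · rw [hall i (by omega), mul_zero]
          · have : (i:ℕ) = w - 1 := by omega
            rw [hz i (by simp [this]), mul_zero]
        · have : w - (i:ℕ) = 0 := by omega
          rw [this, zero_mul]
    omega
  · push_neg at hall
    obtain ⟨i, hi2, hiz⟩ := hall
    have hle : (w - (i:ℕ)) * z i ≤ ∑ j : Fin (w+1), (w - (j:ℕ)) * z j :=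
      Finset.single_le_sum (f := fun j : Fin (w+1) => (w - (j:ℕ)) * z j) (fun j _ => Nat.zero_le _) (Finset.mem_univ i)
    have h2 : 2 ≤ (w - (i:ℕ)) * z i := by
      calc 2 = 2 * 1 := by omega
      _ ≤ (w - (i:ℕ)) * z i := Nat.mul_le_mul (by omega) (by omega)
    omega

lemma reach_t_even {ℓ t : ℕ} (h : Reach 2 ({1} : Set ℕ) ℓ t) : 2 ∣ t := by
  obtain ⟨z, hz, _, ht⟩ := h
  rw [Fin.sum_univ_three] at ht
  have h1 : z 1 = 0 := hz 1 (by simp)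
  rw [h1] at ht
  simp at ht
  omega

lemma reach_one_struct {w r ℓ t : ℕ} (h : Reach w ({r} : Set ℕ) ℓ t) (hl : ℓ = 1) :
    t ≠ r := by
  obtain ⟨z, hz, hℓ, ht⟩ := h
  subst hl
  have hex : ∃ i : Fin (w+1), z i ≠ 0 := by
    by_contra hc
    push_neg at hc
    rw [Finset.sum_eq_zero (fun i _ => hc i)] at hℓ
    omega
  obtain ⟨i, hi⟩ := hex
  have hle : z i ≤ ∑ j : Fin (w+1), z j :=
    Finset.single_le_sum (fun j _ => Nat.zero_le _) (Finset.mem_univ i)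
  have hzi : z i = 1 := by omega
  have hrest : ∀ j : Fin (w+1), j ≠ i → z j = 0 := by
    intro j hj
    have h' : (∑ j ∈ Finset.univ.erase i, z j) + z i = ∑ j : Fin (w+1), z j :=
      Finset.sum_erase_add _ _ (Finset.mem_univ i)
    have h0 : (∑ j ∈ Finset.univ.erase i, z j) = 0 := by omega
    have := (Finset.sum_eq_zero_iff.mp h0) j (Finset.mem_erase.mpr ⟨hj, Finset.mem_univ j⟩)
    exact this
  have htv : t = (i:ℕ) := by
    rw [← ht]
    rw [Finset.sum_eq_single i]
    · rw [hzi, mul_one]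
    · intro j _ hj
      rw [hrest j hj, mul_zero]
    · intro hni
      exact absurd (Finset.mem_univ i) hni
  intro hc
  have : (i:ℕ) ∈ ({r} : Set ℕ) := by rw [← htv] at *; simp [hc]
  have := hz i this
  omega

lemma coprime_int {a d : ℕ} (hgcd : Nat.gcd a d = 1) : IsCoprime (a:ℤ) (d:ℤ) := by
  rw [Int.isCoprime_iff_gcd_eq_one, Int.gcd_natCast_natCast]
  exact hgcd

lemma d_pos {a d w : ℕ} (hgcd : Nat.gcd a d = 1) (hw1 : 1 < w) (hwa : w < a) : 1 ≤ d := by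
  rcases Nat.eq_zero_or_pos d with h | h
  · subst h
    rw [Nat.gcd_zero_right] at hgcd
    omega
  · exact h

lemma empty_avoid {a d w : ℕ} {G : Set ℕ} {n : ℤ} (h : AMem a d w G n) : AMem a d w ∅ n := by
  obtain ⟨z, hz, hn⟩ := h
  exact ⟨z, fun i hi => absurd hi (Set.notMem_empty _), hn⟩

lemma not_AMem_ard {a d w r : ℕ} (hgcd : Nat.gcd a d = 1) (hd : 1 ≤ d) (hra : r < a)
    (hr1 : 1 ≤ r) : ¬ AMem a d w ({r} : Set ℕ) ((a:ℤ) + r * d) := by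
  intro h
  obtain ⟨ℓ, t, hre, hn⟩ := AMem_elim h
  have ha0 : (0:ℤ) < a := by exact_mod_cast (by omega : 0 < a)
  have hd0 : (1:ℤ) ≤ d := by exact_mod_cast hd
  have hb : (t:ℤ) ≤ (w:ℤ) * ℓ := by exact_mod_cast reach_bound hre
  have heq : (1:ℤ) * a + (r:ℤ) * d = (ℓ:ℤ) * a + (t:ℤ) * d := by linarith [hn]
  obtain ⟨k, hk1, hk2⟩ := key (coprime_int hgcd) ha0 heq
  have htn : (0:ℤ) ≤ t := Int.natCast_nonneg t
  have hln : (0:ℤ) ≤ ℓ := Int.natCast_nonneg ℓ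
  have hwn : (0:ℤ) ≤ w := Int.natCast_nonneg w
  have hrz : (r:ℤ) < a := by exact_mod_cast hra
  have hk0 : k = 0 := by
    rcases lt_trichotomy k 0 with h' | h' | h'
    · nlinarith
    · exact h'
    · exfalso
      have hl0 : (ℓ:ℤ) = 0 := by nlinarith
      rw [hl0, mul_zero] at hb
      nlinarith
  subst hk0
  have hℓ1 : ℓ = 1 := by
    have : (ℓ:ℤ) = 1 := by linarith [hk2]
    exact_mod_cast this
  have htr : t = r := by
    have : (t:ℤ) = r := by linarith [hk1]
    exact_mod_cast this
  exact reach_one_struct hre hℓ1 htr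

lemma ALen_a_singleton {a d w r : ℕ} (hgcd : Nat.gcd a d = 1) (hd : 1 ≤ d) (hwa : w < a)
    (hw0 : 1 ≤ w) (hr1 : 1 ≤ r) : ALen a d w ({r} : Set ℕ) (a:ℤ) = {1} := by
  have ha0 : (0:ℤ) < a := by exact_mod_cast (by omega : 0 < a)
  have hd0 : (1:ℤ) ≤ d := by exact_mod_cast hd
  ext x
  simp only [Set.mem_singleton_iff]
  constructor
  · intro hx
    obtain ⟨ℓ, t, hre, hx', hn⟩ := ALen_elim hx
    have hb : (t:ℤ) ≤ (w:ℤ) * ℓ := by exact_mod_cast reach_bound hre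
    have heq : (1:ℤ) * a + (0:ℤ) * d = (ℓ:ℤ) * a + (t:ℤ) * d := by linarith [hn]
    obtain ⟨k, hk1, hk2⟩ := key (coprime_int hgcd) ha0 heq
    have htn : (0:ℤ) ≤ t := Int.natCast_nonneg t
    have hwz : (0:ℤ) < w := by exact_mod_cast (by omega : 0 < w)
    have hk0 : k = 0 := by
      rcases lt_trichotomy k 0 with h' | h' | h'
      · nlinarith
      · exact h'
      · -- k ≥ 1 : ℓ ≤ 0 hence w*ℓ ≤ 0 but t = k*a ≥ a > 0
        exfalso
        have hl0 : (ℓ:ℤ) ≤ 0 := by nlinarith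
        nlinarith
    rw [hx']
    have : (ℓ:ℤ) = 1 := by rw [hk2, hk0]; ring
    rw [this]
  · intro hx
    subst hx
    have h1 := mem_ALen (a := a) (d := d)
      (reach_single (show 0 ≤ w by omega) (not_mem_singleton_nat (show (0:ℕ) ≠ r by omega))) (n := (a:ℤ))
      (by push_cast; ring)
    simpa using h1

lemma ALen_ard_singleton {a d w r : ℕ} (hgcd : Nat.gcd a d = 1) (hd : 1 ≤ d) (hra : r < a)
    (hrw : r ≤ w) : ALen a d w (∅ : Set ℕ) ((a:ℤ) + r * d) = {1} := by
  have ha0 : (0:ℤ) < a := by exact_mod_cast (by omega : 0 < a)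
  have hd0 : (1:ℤ) ≤ d := by exact_mod_cast hd
  have hrz : (r:ℤ) < a := by exact_mod_cast hra
  ext x
  simp only [Set.mem_singleton_iff]
  constructor
  · intro hx
    obtain ⟨ℓ, t, hre, hx', hn⟩ := ALen_elim hx
    have hb : (t:ℤ) ≤ (w:ℤ) * ℓ := by exact_mod_cast reach_bound hre
    have heq : (1:ℤ) * a + (r:ℤ) * d = (ℓ:ℤ) * a + (t:ℤ) * d := by linarith [hn]
    obtain ⟨k, hk1, hk2⟩ := key (coprime_int hgcd) ha0 heq
    have htn : (0:ℤ) ≤ t := Int.natCast_nonneg t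
    have hrz0 : (0:ℤ) ≤ r := Int.natCast_nonneg r
    have hwz : (0:ℤ) ≤ w := Int.natCast_nonneg w
    have hk0 : k = 0 := by
      rcases lt_trichotomy k 0 with h' | h' | h'
      · nlinarith
      · exact h'
      · exfalso
        have hl0 : (ℓ:ℤ) ≤ 0 := by nlinarith
        nlinarith
    rw [hx']
    have : (ℓ:ℤ) = 1 := by rw [hk2, hk0]; ring
    rw [this]
  · intro hx
    subst hx
    have h1 := mem_ALen (a := a) (d := d)
      (reach_single (show r ≤ w from hrw) (Set.notMem_empty r)) (n := (a:ℤ) + r * d)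
      (by push_cast; ring)
    simpa using h1

lemma ALen_congr_mid {a d w r : ℕ} {n : ℤ} (hgcd : Nat.gcd a d = 1) (hd : 1 ≤ d)
    (hr2 : 2 ≤ r) (hrw : r + 2 ≤ w) (hne : n ≠ (a:ℤ) + r * d) :
    ALen a d w ({r} : Set ℕ) n = ALen a d w (∅ : Set ℕ) n := by
  ext x
  constructor
  · rintro ⟨z, hz, hn, hs⟩
    exact ⟨z, fun i hi => absurd hi (Set.notMem_empty _), hn, hs⟩
  · intro hx
    obtain ⟨ℓ, t, hre, hx', hn⟩ := ALen_elim hx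
    have hb : t ≤ w * ℓ := reach_bound hre
    by_cases hc : ℓ = 1 ∧ t = r
    · exfalso
      apply hne
      rw [hn, hc.1, hc.2]
      push_cast
      ring
    · have hre' := reach_avoidr hr2 hrw ℓ t hb hc
      rw [hx']
      exact mem_ALen hre' hn

theorem eq_case {a d w r : ℕ} (hgcd : Nat.gcd a d = 1) (hwa : w < a)
    (hr2 : 2 ≤ r) (hrw : r + 2 ≤ w) :
    ALenSets a d w ({r} : Set ℕ) = ALenSets a d w (∅ : Set ℕ) := by
  have hw1 : 1 < w := by omega
  have hd : 1 ≤ d := d_pos hgcd hw1 hwa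
  have hra : r < a := by omega
  ext L
  simp only [ALenSets, Set.mem_setOf_eq]
  constructor
  · rintro ⟨n, hmem, rfl⟩
    have hne : n ≠ (a:ℤ) + r * d := by
      rintro rfl
      exact not_AMem_ard hgcd hd hra (by omega) hmem
    exact ⟨n, empty_avoid hmem, ALen_congr_mid hgcd hd hr2 hrw hne⟩
  · rintro ⟨n, hmem, rfl⟩
    by_cases hc : n = (a:ℤ) + r * d
    · refine ⟨(a:ℤ), ?_, ?_⟩
      · exact AMem_of_reach (reach_single (show 0 ≤ w by omega)
          (not_mem_singleton_nat (show (0:ℕ) ≠ r by omega))) (by push_cast; ring)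
      · rw [hc, ALen_ard_singleton hgcd hd hra (by omega),
          ALen_a_singleton hgcd hd hwa (by omega) (by omega)]
    · refine ⟨n, ?_, (ALen_congr_mid hgcd hd hr2 hrw hc).symm⟩
      
      obtain ⟨ℓ, t, hre, hn⟩ := AMem_elim hmem
      have hb : t ≤ w * ℓ := reach_bound hre
      by_cases hc2 : ℓ = 1 ∧ t = r
      · exfalso
        apply hc
        rw [hn, hc2.1, hc2.2]
        push_cast
        ring
      · exact AMem_of_reach (reach_avoidr hr2 hrw ℓ t hb hc2) hn

/-- The distinguishing set of lengths. -/
def Wset (a d w : ℕ) : Set ℤ :=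
  {x : ℤ | ∃ k : ℕ, k ≤ w - 2 ∧ x = ((a:ℤ) + (d:ℤ) * ((w:ℤ) - 1)) - (k:ℤ) * d}

lemma Wset_not_mem {a d w : ℕ} (hw : 2 ≤ w) (hwa : w < a) (hd : 1 ≤ d) :
    Wset a d w ∉ ALenSets a d w (∅ : Set ℕ) := by
  rintro ⟨m, hmem, hLW⟩
  have ha0 : (0:ℤ) < a := by exact_mod_cast (by omega : 0 < a)
  have hd0 : (1:ℤ) ≤ d := by exact_mod_cast hd
  have hw0 : (2:ℤ) ≤ w := by exact_mod_cast hw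
  set μ : ℤ := (a:ℤ) + (d:ℤ) * ((w:ℤ) - 1) with hμ
  have hμW : μ ∈ Wset a d w := ⟨0, by omega, by push_cast; ring⟩
  rw [hLW] at hμW
  obtain ⟨ℓ, t, hre, hx, hn⟩ := ALen_elim hμW
  have hb : t ≤ w * ℓ := reach_bound hre
  -- Step 1 : t ≤ a - 1
  have hta : t < a := by
    by_contra hc
    push_neg at hc
    -- then μ + d is a length of m
    have hmd : ((ℓ + d : ℕ) : ℤ) ∈ ALen a d w ∅ m := by
      apply mem_ALen (t := t - a)
      · apply reach_all
        have hms : w * (ℓ + d) = w * ℓ + w * d := by ring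
        omega
      · push_cast [Nat.cast_sub hc]
        push_cast at hn
        linarith [hn]
    rw [← hLW] at hmd
    obtain ⟨k, hk, hke⟩ := hmd
    have hcast : ((ℓ + d : ℕ) : ℤ) = (ℓ:ℤ) + d := by push_cast; ring
    rw [hcast, ← hx] at hke
    have hkz : (0:ℤ) ≤ k := Int.natCast_nonneg k
    nlinarith [hke]
  -- Step 2 : a is a length of m
  have hma : ((a : ℕ) : ℤ) ∈ ALen a d w ∅ m := by
    apply mem_ALen (t := t + (w - 1) * a)
    · apply reach_all
      have e3 : (w - 1) * a + a = w * a := by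
        rw [← Nat.succ_mul]
        congr 1
        omega
      omega
    · push_cast [Nat.cast_sub (show 1 ≤ w by omega)]
      have hxx : (ℓ:ℤ) = μ := hx.symm ▸ rfl
      rw [hn, ← hx]
      push_cast
      ring
  rw [← hLW] at hma
  obtain ⟨k, hk, hke⟩ := hma
  have hkc : (k:ℤ) ≤ (w:ℤ) - 2 := by
    have : ((w - 2 : ℕ) : ℤ) = (w:ℤ) - 2 := by omega
    omega
  have hkz : (0:ℤ) ≤ k := Int.natCast_nonneg k
  -- a = μ - k d gives (w - 1 - k) d = 0, impossible
  have hprod : (1:ℤ) * 1 ≤ ((w:ℤ) - 1 - k) * d := mul_le_mul (by omega) hd0 (by omega) (by omega)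
  nlinarith [hke]

lemma Wset_mem_one {a d w : ℕ} (hgcd : Nat.gcd a d = 1) (hw : 3 ≤ w) (hwa : w < a)
    (hd : 1 ≤ d) : Wset a d w ∈ ALenSets a d w ({1} : Set ℕ) := by
  have ha0 : (0:ℤ) < a := by exact_mod_cast (by omega : 0 < a)
  have hd0 : (1:ℤ) ≤ d := by exact_mod_cast hd
  have hw0 : (3:ℤ) ≤ w := by exact_mod_cast hw
  refine ⟨((a:ℤ) + (d:ℤ) * w) * a + d, ?_, ?_⟩
  · -- membership in the monoid : length a + d*(w-1), weight 1 + a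
    apply AMem_of_reach (ℓ := a + d * (w - 1)) (t := 1 + a)
    · apply reach_avoid1 hw
      · have e1 : 3 * a ≤ w * a := Nat.mul_le_mul_right a hw
        have e2 : w * a ≤ w * (a + d * (w - 1)) := Nat.mul_le_mul_left w (by omega)
        omega
      · omega
    · push_cast [Nat.cast_sub (show 1 ≤ w by omega)]
      ring
  · -- the length set is exactly Wset
    ext x
    constructor
    · rintro ⟨k, hk, rfl⟩
      have hkw : k + 1 ≤ w - 1 := by omega
      have hcast : ((a + d * (w - 1 - k) : ℕ) : ℤ)
          = (a:ℤ) + (d:ℤ) * ((w:ℤ) - 1) - (k:ℤ) * d := by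
        push_cast [Nat.cast_sub (show k ≤ w - 1 by omega), Nat.cast_sub (show 1 ≤ w by omega)]
        ring
      rw [← hcast]
      apply mem_ALen (t := 1 + (k + 1) * a)
      · apply reach_avoid1 hw
        · have e1 : (k + 1) * a ≤ (w - 1) * a := Nat.mul_le_mul_right a hkw
          have e3 : (w - 1) * a + a = w * a := by
            rw [← Nat.succ_mul]; congr 1; omega
          have e2 : w * a ≤ w * (a + d * (w - 1 - k)) := Nat.mul_le_mul_left w (by omega)
          omega
        · have : (k + 1) * a ≠ 0 := Nat.mul_ne_zero (by omega) (by omega)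
          omega
      · rw [hcast]
        push_cast
        ring
    · intro hx
      obtain ⟨ℓ, t, hre, hx', hn⟩ := ALen_elim hx
      have hb : (t:ℤ) ≤ (w:ℤ) * ℓ := by exact_mod_cast reach_bound hre
      have heq : ((a:ℤ) + (d:ℤ) * w) * a + (1:ℤ) * d = (ℓ:ℤ) * a + (t:ℤ) * d := by
        linear_combination hn
      obtain ⟨k, hk1, hk2⟩ := key (coprime_int hgcd) ha0 heq
      have ht1 : (t:ℤ) ≠ 1 := by
        intro hc
        exact reach_t_ne_one hre (by exact_mod_cast hc)
      have htn : (0:ℤ) ≤ t := Int.natCast_nonneg t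
      have hk1' : 1 ≤ k := by
        rcases lt_trichotomy k 0 with h' | h' | h'
        · nlinarith
        · exfalso; apply ht1; rw [hk1, h']; ring
        · omega
      have hkw : k ≤ (w:ℤ) - 1 := by
        by_contra hc
        push_neg at hc
        have hge : (w:ℤ) ≤ k := by omega
        have := mul_le_mul_of_nonneg_right hge (show (0:ℤ) ≤ (a:ℤ) + d * w by nlinarith)
        nlinarith [hk1, hk2, hb]
      refine ⟨(k - 1).toNat, by omega, ?_⟩
      have htc : ((k - 1).toNat : ℤ) = k - 1 := Int.toNat_of_nonneg (by omega)
      rw [htc, hx', hk2]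
      ring

lemma Wset_mem_w1 {a d w : ℕ} (hgcd : Nat.gcd a d = 1) (hw : 3 ≤ w) (hwa : w < a)
    (hd : 1 ≤ d) : Wset a d w ∈ ALenSets a d w ({w - 1} : Set ℕ) := by
  have ha0 : (0:ℤ) < a := by exact_mod_cast (by omega : 0 < a)
  have hd0 : (1:ℤ) ≤ d := by exact_mod_cast hd
  have hw0 : (3:ℤ) ≤ w := by exact_mod_cast hw
  set μ : ℤ := (a:ℤ) + (d:ℤ) * ((w:ℤ) - 1) with hμ
  have hard : ∀ k : ℕ, k ≤ w - 2 →
      ((a + d * (w - 1 - k) : ℕ) : ℤ) = μ - (k:ℤ) * d := by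
    intro k hk
    push_cast [Nat.cast_sub (show k ≤ w - 1 by omega), Nat.cast_sub (show 1 ≤ w by omega)]
    ring
  have hreachk : ∀ k : ℕ, k ≤ w - 2 → Reach w ({w - 1} : Set ℕ) (a + d * (w - 1 - k)) (a - 1 + k * a) := by
    intro k hk
    apply reach_avoidw1 hw
    · have e1 : (k + 1) * a ≤ (w - 1) * a := Nat.mul_le_mul_right a (by omega)
      have e3 : (w - 1) * a + a = w * a := by rw [← Nat.succ_mul]; congr 1; omega
      have e2 : w * a ≤ w * (a + d * (w - 1 - k)) := Nat.mul_le_mul_left w (by omega)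
      have e4 : (k + 1) * a = k * a + a := by rw [Nat.succ_mul]
      omega
    · have e1 : (k + 1) * a ≤ (w - 1) * a := Nat.mul_le_mul_right a (by omega)
      have e3 : (w - 1) * a + a = w * a := by rw [← Nat.succ_mul]; congr 1; omega
      have e2 : w * a ≤ w * (a + d * (w - 1 - k)) := Nat.mul_le_mul_left w (by omega)
      have e4 : (k + 1) * a = k * a + a := by rw [Nat.succ_mul]
      omega
  have heqk : ∀ k : ℕ, k ≤ w - 2 →
      μ * (a:ℤ) + ((a:ℤ) - 1) * d = ((a + d * (w - 1 - k) : ℕ) : ℤ) * a + ((a - 1 + k * a : ℕ) : ℤ) * d := by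
    intro k hk
    rw [hard k hk]
    push_cast [Nat.cast_sub (show 1 ≤ a by omega)]
    ring
  refine ⟨μ * (a:ℤ) + ((a:ℤ) - 1) * d, ?_, ?_⟩
  · exact AMem_of_reach (hreachk 0 (by omega)) (by simpa using heqk 0 (by omega))
  · ext x
    constructor
    · rintro ⟨k, hk, rfl⟩
      rw [← hard k hk]
      exact mem_ALen (hreachk k hk) (heqk k hk)
    · intro hx
      obtain ⟨ℓ, t, hre, hx', hn⟩ := ALen_elim hx
      have hb : (t:ℤ) ≤ (w:ℤ) * ℓ := by exact_mod_cast reach_bound hre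
      have heq : μ * (a:ℤ) + ((a:ℤ) - 1) * d = (ℓ:ℤ) * a + (t:ℤ) * d := hn.symm ▸ rfl
      obtain ⟨k, hk1, hk2⟩ := key (coprime_int hgcd) ha0 heq
      have htn : (0:ℤ) ≤ t := Int.natCast_nonneg t
      have hk0 : 0 ≤ k := by
        rcases lt_trichotomy k 0 with h' | h' | h'
        · nlinarith
        · omega
        · omega
      have hid : (w:ℤ) * ℓ - t = ((w:ℤ) - 1 - k) * ((a:ℤ) + (w:ℤ) * d) + 1 := by
        rw [hk1, hk2, hμ]
        ring
      have hkw : k ≤ (w:ℤ) - 1 := by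
        by_contra hc
        push_neg at hc
        have h5 : (w:ℤ) - 1 - k ≤ -1 := by omega
        have := mul_le_mul_of_nonneg_right h5 (show (0:ℤ) ≤ (a:ℤ) + w * d by positivity)
        nlinarith
      have hkne : k ≠ (w:ℤ) - 1 := by
        intro hc
        have hne := reach_w1_struct (by omega) hre
        apply hne
        have h0 : (w:ℤ) - 1 - k = 0 := by omega
        rw [h0, zero_mul] at hid
        have : (t:ℤ) + 1 = (w:ℤ) * ℓ := by linarith
        exact_mod_cast this
      refine ⟨k.toNat, by omega, ?_⟩
      have htc : (k.toNat : ℤ) = k := Int.toNat_of_nonneg hk0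
      rw [htc, hx', hk2]

lemma w2_odd_mem {a d : ℕ} (hgcd : Nat.gcd a d = 1) (hwa : 2 < a) (hd : 1 ≤ d)
    (hodd : ¬ 2 ∣ a) : Wset a d 2 ∈ ALenSets a d 2 ({1} : Set ℕ) := by
  have ha0 : (0:ℤ) < a := by exact_mod_cast (by omega : 0 < a)
  have hd0 : (1:ℤ) ≤ d := by exact_mod_cast hd
  have hμc : ((a + d : ℕ) : ℤ) = (a:ℤ) + (d:ℤ) * ((2:ℤ) - 1) - (0:ℤ) * d := by push_cast; ring
  have hre : Reach 2 ({1} : Set ℕ) (a + d) 2 := by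
    have := reach2_even (show 1 ≤ a + d by omega)
    simpa using this
  have heqn : ((a:ℤ) + d) * a + 2 * d = ((a + d : ℕ) : ℤ) * a + ((2:ℕ) : ℤ) * d := by
    push_cast; ring
  refine ⟨((a:ℤ) + d) * a + 2 * d, AMem_of_reach hre (by push_cast; ring), ?_⟩
  ext x
  constructor
  · rintro ⟨k, hk, rfl⟩
    have hk0 : k = 0 := by omega
    subst hk0
    have h2 : (a:ℤ) + (d:ℤ) * (((2:ℕ):ℤ) - 1) - ((0:ℕ):ℤ) * d = ((a + d : ℕ) : ℤ) := by
      push_cast; ring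
    rw [h2]
    exact mem_ALen hre heqn
  · intro hx
    obtain ⟨ℓ, t, hre', hx', hn⟩ := ALen_elim hx
    have hb : (t:ℤ) ≤ (2:ℤ) * ℓ := by exact_mod_cast reach_bound hre'
    have heq : ((a:ℤ) + d) * a + (2:ℤ) * d = (ℓ:ℤ) * a + (t:ℤ) * d := by
      linear_combination hn
    obtain ⟨k, hk1, hk2⟩ := key (coprime_int hgcd) ha0 heq
    have heven : 2 ∣ t := reach_t_even hre'
    have htn : (0:ℤ) ≤ t := Int.natCast_nonneg t
    have hk0 : 0 ≤ k := by
      rcases lt_trichotomy k 0 with h' | h' | h'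
      · nlinarith
      · omega
      · omega
    have hk1' : k ≤ 1 := by
      by_contra hc
      push_neg at hc
      have hge : (2:ℤ) ≤ k := by omega
      have := mul_le_mul_of_nonneg_right hge (show (0:ℤ) ≤ (a:ℤ) + 2 * d by positivity)
      nlinarith
    have hkne : k ≠ 1 := by
      intro hc
      subst hc
      have : (t:ℤ) = 2 + a := by linarith [hk1]
      have ht2 : t = 2 + a := by exact_mod_cast this
      omega
    have hk00 : k = 0 := by omega
    refine ⟨0, by omega, ?_⟩
    rw [hx', hk2, hk00]
    push_cast
    ring

lemma w2_even_memS {a d : ℕ} (hgcd : Nat.gcd a d = 1) (hwa : 2 < a) (hd : 1 ≤ d) :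
    ({(a:ℤ) + d - 1} : Set ℤ) ∈ ALenSets a d 2 (∅ : Set ℕ) := by
  have ha0 : (0:ℤ) < a := by exact_mod_cast (by omega : 0 < a)
  have hd0 : (1:ℤ) ≤ d := by exact_mod_cast hd
  have c1 : ((a + d - 1 : ℕ) : ℤ) = (a:ℤ) + d - 1 := by omega
  have c2 : ((a - 1 : ℕ) : ℤ) = (a:ℤ) - 1 := by omega
  have hre : Reach 2 (∅ : Set ℕ) (a + d - 1) (a - 1) := reach_all _ _ (by omega)
  have heqn : ((a:ℤ) + d - 1) * a + ((a:ℤ) - 1) * d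
      = ((a + d - 1 : ℕ) : ℤ) * a + ((a - 1 : ℕ) : ℤ) * d := by rw [c1, c2]
  refine ⟨((a:ℤ) + d - 1) * a + ((a:ℤ) - 1) * d, AMem_of_reach hre heqn, ?_⟩
  ext x
  simp only [Set.mem_singleton_iff]
  constructor
  · intro hx
    subst hx
    have := mem_ALen hre heqn
    rwa [c1] at this
  · intro hx
    obtain ⟨ℓ, t, hre', hx', hn⟩ := ALen_elim hx
    have hb : (t:ℤ) ≤ (2:ℤ) * ℓ := by exact_mod_cast reach_bound hre'
    have heq : ((a:ℤ) + d - 1) * a + ((a:ℤ) - 1) * d = (ℓ:ℤ) * a + (t:ℤ) * d := by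
      linear_combination hn
    obtain ⟨k, hk1, hk2⟩ := key (coprime_int hgcd) ha0 heq
    have htn : (0:ℤ) ≤ t := Int.natCast_nonneg t
    have hk0 : 0 ≤ k := by
      rcases lt_trichotomy k 0 with h' | h' | h'
      · nlinarith
      · omega
      · omega
    have hk1' : k ≤ 0 := by
      by_contra hc
      push_neg at hc
      have hge : (1:ℤ) ≤ k := by omega
      have := mul_le_mul_of_nonneg_right hge (show (0:ℤ) ≤ (a:ℤ) + 2 * d by positivity)
      nlinarith
    have hk00 : k = 0 := by omega
    rw [hx', hk2, hk00]
    ring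

lemma w2_even_notmem {a d : ℕ} (hgcd : Nat.gcd a d = 1) (hwa : 2 < a) (hd : 1 ≤ d)
    (heva : 2 ∣ a) : ({(a:ℤ) + d - 1} : Set ℤ) ∉ ALenSets a d 2 ({1} : Set ℕ) := by
  rintro ⟨m, hmem, hLW⟩
  have ha0 : (0:ℤ) < a := by exact_mod_cast (by omega : 0 < a)
  have hd0 : (1:ℤ) ≤ d := by exact_mod_cast hd
  have hμ2 : ((a:ℤ) + d - 1) ∈ ALen a d 2 ({1} : Set ℕ) m := by
    rw [← hLW]; rfl
  obtain ⟨ℓ, t, hre, hx, hn⟩ := ALen_elim hμ2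
  have hb : t ≤ 2 * ℓ := reach_bound hre
  have heven : 2 ∣ t := reach_t_even hre
  -- step 1 : t < a
  have hta : t < a := by
    by_contra hc
    push_neg at hc
    obtain ⟨s, hs⟩ : ∃ s, t - a = 2 * s := ⟨(t - a) / 2, by omega⟩
    have hsle : s ≤ ℓ + d := by omega
    have hre2 : Reach 2 ({1} : Set ℕ) (ℓ + d) (t - a) := by
      rw [hs]; exact reach2_even hsle
    have hmd : ((ℓ + d : ℕ) : ℤ) ∈ ALen a d 2 ({1} : Set ℕ) m := by
      apply mem_ALen hre2
      have ct : ((t - a : ℕ) : ℤ) = (t:ℤ) - a := by omega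
      rw [ct]
      push_cast
      push_cast at hn
      linarith
    rw [← hLW] at hmd
    simp only [Set.mem_singleton_iff] at hmd
    have : ((ℓ + d : ℕ) : ℤ) = (ℓ:ℤ) + d := by push_cast; ring
    rw [this, ← hx] at hmd
    omega
  have hta2 : t ≤ a - 2 := by omega
  -- step 2 : a - 1 is a length
  obtain ⟨s, hs⟩ : ∃ s, t + a = 2 * s := ⟨(t + a) / 2, by omega⟩
  have hsle : s ≤ a - 1 := by omega
  have hre3 : Reach 2 ({1} : Set ℕ) (a - 1) (t + a) := by
    rw [hs]; exact reach2_even hsle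
  have hma : ((a - 1 : ℕ) : ℤ) ∈ ALen a d 2 ({1} : Set ℕ) m := by
    apply mem_ALen hre3
    have c2 : ((a - 1 : ℕ) : ℤ) = (a:ℤ) - 1 := by omega
    have c3 : ((t + a : ℕ) : ℤ) = (t:ℤ) + a := by push_cast; ring
    rw [c2, c3, hn, ← hx]
    ring
  rw [← hLW] at hma
  simp only [Set.mem_singleton_iff] at hma
  omega

theorem stmt17 (a d w r : ℕ) (hgcd : Nat.gcd a d = 1) (hw1 : 1 < w) (hwa : w < a)
    (hr1 : 1 ≤ r) (hr2 : r ≤ w - 1) :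
    ALenSets a d w {r} = ALenSets a d w ∅ ↔ (1 < r ∧ r < w - 1) := by
  have hd : 1 ≤ d := d_pos hgcd hw1 hwa
  constructor
  · intro heq
    by_contra hnot
    push_neg at hnot
    rcases (by omega : w = 2 ∨ 3 ≤ w) with hw2 | hw3
    · -- w = 2, so r = 1
      have hr : r = 1 := by omega
      subst hr
      subst hw2
      by_cases heva : 2 ∣ a
      · have h1 := w2_even_memS hgcd (by omega) hd
        have h2 := w2_even_notmem hgcd (by omega) hd heva
        rw [← heq] at h1
        exact h2 h1
      · have h1 := w2_odd_mem hgcd (by omega) hd heva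
        have h2 := Wset_not_mem (a := a) (d := d) (w := 2) (by omega) (by omega) hd
        rw [heq] at h1
        exact h2 h1
    · -- w ≥ 3, r = 1 or r = w - 1
      rcases (by omega : r = 1 ∨ r = w - 1) with hr | hr
      · subst hr
        have h1 := Wset_mem_one hgcd hw3 hwa hd
        have h2 := Wset_not_mem (a := a) (d := d) (w := w) (by omega) hwa hd
        rw [heq] at h1
        exact h2 h1
      · subst hr
        have h1 := Wset_mem_w1 hgcd hw3 hwa hd
        have h2 := Wset_not_mem (a := a) (d := d) (w := w) (by omega) hwa hd
        rw [heq] at h1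
        exact h2 h1
  · rintro ⟨h1, h2⟩
    exact eq_case hgcd hwa (by omega) (by omega)
end

section
/- Let S = <a, a+d, ..., a+wd> with gcd(a,d)=1 and 2 < w < a. Then the set of length sets of S_1 (generator a+d omitted) equals the set of length sets of S_{w−1} (generator a+(w−1)d omitted): L(S_1) = L(S_{w−1}). -/
lemma nosmall (c s k : ℤ) (hc : 0 < c) (h1 : 0 < k) (h2 : k < c) : s * c ≠ k := by
  intro h
  have hdvd : c ∣ k := ⟨s, by linarith [mul_comm s c]⟩
  have := Int.le_of_dvd h1 hdvd
  omega

lemma step (c T t k : ℤ) (hc : 0 < c) (hk : 0 ≤ k) (hkc : k < c) :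
    t * c ≤ T * c + k ↔ t ≤ T := by
  constructor
  · intro h
    by_contra hlt
    push_neg at hlt
    have : (T + 1) * c ≤ t * c := mul_le_mul_of_nonneg_right (by omega) (le_of_lt hc)
    nlinarith
  · intro h
    have : t * c ≤ T * c := mul_le_mul_of_nonneg_right h (le_of_lt hc)
    omega

lemma sum_const_ind (w k v : ℕ) (hk : k ≤ w) :
    ∑ i : Fin (w+1), (if (i : ℕ) = k then v else 0) = v := by
  rw [Finset.sum_eq_single (⟨k, by omega⟩ : Fin (w+1))]
  · simp
  · intro b _ hb
    rw [if_neg]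
    intro hbk
    exact hb (Fin.ext hbk)
  · intro h; exact absurd (Finset.mem_univ _) h

lemma sum_mul_ind (w k v : ℕ) (hk : k ≤ w) :
    ∑ i : Fin (w+1), (i : ℕ) * (if (i : ℕ) = k then v else 0) = k * v := by
  rw [Finset.sum_eq_single (⟨k, by omega⟩ : Fin (w+1))]
  · simp
  · intro b _ hb
    rw [if_neg, mul_zero]
    intro hbk
    exact hb (Fin.ext hbk)
  · intro h; exact absurd (Finset.mem_univ _) h

lemma realize1 (w : ℕ) (hw : 3 ≤ w) :
    ∀ ℓ m : ℕ, m ≤ ℓ * w → m ≠ 1 →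
    ∃ z : Fin (w+1) → ℕ, (∀ i : Fin (w+1), (i : ℕ) = 1 → z i = 0) ∧
      (∑ i : Fin (w+1), z i) = ℓ ∧ (∑ i : Fin (w+1), (i : ℕ) * z i) = m := by
  intro ℓ
  induction ℓ with
  | zero =>
    intro m hm _
    have hm0 : m = 0 := by simpa using hm
    subst hm0
    exact ⟨fun _ => 0, fun _ _ => rfl, by simp, by simp⟩
  | succ ℓ ih =>
    intro m hm hm1
    have hsw : (ℓ+1)*w = ℓ*w + w := by ring
    rw [hsw] at hm
    have hw3 : w ≤ ℓ * w ∨ ℓ = 0 := by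
      rcases Nat.eq_zero_or_pos ℓ with h | h
      · right; exact h
      · left; exact Nat.le_mul_of_pos_left w h
    have hz0 : ℓ = 0 → ℓ * w = 0 := by intro h; simp [h]
    obtain ⟨k', m', hk'w, hk'1, hm'le, hm'1, hsum⟩ :
        ∃ k' m' : ℕ, k' ≤ w ∧ k' ≠ 1 ∧ m' ≤ ℓ*w ∧ m' ≠ 1 ∧ m' + k' = m := by
      by_cases hcase : m ≤ ℓ*w
      · exact ⟨0, m, by omega, by omega, hcase, hm1, by omega⟩
      · by_cases hcase2 : m = ℓ*w + 1
        · exact ⟨2, ℓ*w - 1, by omega, by omega, by omega, by omega, by omega⟩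
        · exact ⟨m - ℓ*w, ℓ*w, by omega, by omega, le_refl _, by omega, by omega⟩
    obtain ⟨z, h1, h2, h3⟩ := ih m' hm'le hm'1
    refine ⟨fun i => z i + (if (i : ℕ) = k' then 1 else 0), ?_, ?_, ?_⟩
    · intro i hi
      show z i + (if (i : ℕ) = k' then 1 else 0) = 0
      rw [h1 i hi, if_neg (by omega), add_zero]
    · rw [Finset.sum_add_distrib, h2, sum_const_ind w k' 1 hk'w]
    · have : ∀ i : Fin (w+1), (i : ℕ) * (z i + (if (i : ℕ) = k' then 1 else 0))
          = (i : ℕ) * z i + (i : ℕ) * (if (i : ℕ) = k' then 1 else 0) := fun i => mul_add _ _ _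
      simp_rw [this]
      rw [Finset.sum_add_distrib, h3, sum_mul_ind w k' 1 hk'w]
      omega

lemma sum_wsub (w : ℕ) (z : Fin (w+1) → ℕ) :
    ∑ i : Fin (w+1), (w - (i : ℕ)) * z i + ∑ i : Fin (w+1), (i : ℕ) * z i
      = w * ∑ i : Fin (w+1), z i := by
  rw [← Finset.sum_add_distrib, Finset.mul_sum]
  refine Finset.sum_congr rfl fun i _ => ?_
  rw [← add_mul, Nat.sub_add_cancel (by omega : (i : ℕ) ≤ w)]

lemma sum_rev_eq (w : ℕ) (z : Fin (w+1) → ℕ) :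
    (∑ i : Fin (w+1), z (Fin.rev i)) = ∑ i : Fin (w+1), z i :=
  Equiv.sum_comp Fin.revPerm z

lemma sum_rev_mul (w : ℕ) (z : Fin (w+1) → ℕ) :
    (∑ i : Fin (w+1), (i : ℕ) * z (Fin.rev i)) = ∑ i : Fin (w+1), (w - (i : ℕ)) * z i := by
  rw [← Equiv.sum_comp Fin.revPerm (fun j : Fin (w+1) => (w - (j : ℕ)) * z j)]
  refine Finset.sum_congr rfl fun i _ => ?_
  congr 1
  have := i.isLt
  simp only [Fin.revPerm_apply, Fin.val_rev]
  omega

lemma realize_w (w : ℕ) (hw : 3 ≤ w) (ℓ m : ℕ) (hm : m ≤ ℓ * w) (hm1 : ℓ * w - m ≠ 1) :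
    ∃ z : Fin (w+1) → ℕ, (∀ i : Fin (w+1), (i : ℕ) = w - 1 → z i = 0) ∧
      (∑ i : Fin (w+1), z i) = ℓ ∧ (∑ i : Fin (w+1), (i : ℕ) * z i) = m := by
  obtain ⟨z, h1, h2, h3⟩ := realize1 w hw ℓ (ℓ*w - m) (Nat.sub_le _ _) hm1
  refine ⟨fun i => z (Fin.rev i), ?_, ?_, ?_⟩
  · intro i hi
    apply h1
    rw [Fin.val_rev]
    omega
  · rw [sum_rev_eq]; exact h2
  · rw [sum_rev_mul]
    have e2 := sum_wsub w z
    rw [h2] at e2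
    have h3' : (∑ i : Fin (w+1), (i : ℕ) * z i) + m = ℓ * w := by
      rw [h3]; exact Nat.sub_add_cancel hm
    have hcomm : w * ℓ = ℓ * w := mul_comm w ℓ
    linarith [e2, h3']

lemma sum_split (a d w : ℕ) (z : Fin (w+1) → ℕ) :
    ∑ i : Fin (w+1), (z i : ℤ) * ((a:ℤ) + ((i : ℕ) : ℤ) * d) =
      ((∑ i : Fin (w+1), z i : ℕ) : ℤ) * a + ((∑ i : Fin (w+1), (i : ℕ) * z i : ℕ) : ℤ) * d := by
  push_cast
  rw [Finset.sum_mul, Finset.sum_mul, ← Finset.sum_add_distrib]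
  exact Finset.sum_congr rfl fun i _ => by ring

lemma sum_le_w (w : ℕ) (z : Fin (w+1) → ℕ) :
    (∑ i : Fin (w+1), (i : ℕ) * z i) ≤ (∑ i : Fin (w+1), z i) * w := by
  rw [Finset.sum_mul]
  refine Finset.sum_le_sum fun i _ => ?_
  have : (i : ℕ) ≤ w := by omega
  calc (i : ℕ) * z i ≤ w * z i := Nat.mul_le_mul_right _ this
    _ = z i * w := mul_comm _ _

lemma mem_alen1 (a d w : ℕ) (hw : 3 ≤ w) (n ℓ : ℤ) :
    ℓ ∈ ALen a d w {1} n ↔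
      ∃ L m : ℕ, ℓ = (L : ℤ) ∧ n = (L : ℤ) * a + (m : ℤ) * d ∧ m ≤ L * w ∧ m ≠ 1 := by
  constructor
  · rintro ⟨z, hz, hn, hlen⟩
    refine ⟨∑ i : Fin (w+1), z i, ∑ i : Fin (w+1), (i : ℕ) * z i, ?_, ?_, sum_le_w w z, ?_⟩
    · rw [← hlen]; push_cast; rfl
    · rw [hn, sum_split]
    · intro h
      obtain ⟨i, _, hi⟩ := Finset.exists_ne_zero_of_sum_ne_zero (h ▸ one_ne_zero)
      have hiz : z i ≠ 0 := by intro h0; rw [h0, mul_zero] at hi; exact hi rfl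
      have hiv : (i : ℕ) ≠ 0 := by intro h0; rw [h0, zero_mul] at hi; exact hi rfl
      rcases eq_or_ne (i : ℕ) 1 with h1 | h1
      · exact hiz (hz i (by simpa using h1))
      · have t1 : 2 ≤ (i : ℕ) * z i := by
          have := Nat.mul_le_mul (show 2 ≤ (i : ℕ) by omega) (show 1 ≤ z i by omega)
          simpa using this
        have t2 : (i : ℕ) * z i ≤ 1 :=
          le_trans (Finset.single_le_sum
            (f := fun i : Fin (w+1) => (i : ℕ) * z i) (fun _ _ => Nat.zero_le _)
            (Finset.mem_univ i)) (le_of_eq h)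
        omega
  · rintro ⟨L, m, rfl, hn, hmle, hm1⟩
    obtain ⟨z, h1, h2, h3⟩ := realize1 w hw L m hmle hm1
    refine ⟨z, fun i hi => h1 i (by simpa using hi), ?_, ?_⟩
    · rw [sum_split, h2, h3]; exact hn
    · rw [show (∑ i : Fin (w+1), (z i : ℤ)) = ((∑ i : Fin (w+1), z i : ℕ) : ℤ) by push_cast; rfl, h2]

lemma mem_alenw (a d w : ℕ) (hw : 3 ≤ w) (n ℓ : ℤ) :
    ℓ ∈ ALen a d w {w - 1} n ↔
      ∃ L m : ℕ, ℓ = (L : ℤ) ∧ n = (L : ℤ) * a + (m : ℤ) * d ∧ m ≤ L * w ∧ L * w - m ≠ 1 := by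
  constructor
  · rintro ⟨z, hz, hn, hlen⟩
    refine ⟨∑ i : Fin (w+1), z i, ∑ i : Fin (w+1), (i : ℕ) * z i, ?_, ?_, sum_le_w w z, ?_⟩
    · rw [← hlen]; push_cast; rfl
    · rw [hn, sum_split]
    · intro h
      -- S1 := ∑ (w - i) * z i  equals 1
      have e2 := sum_wsub w z
      have hS1 : (∑ i : Fin (w+1), (w - (i : ℕ)) * z i) = 1 := by
        have hle := sum_le_w w z
        have hc : (∑ i : Fin (w+1), z i) * w = w * (∑ i : Fin (w+1), z i) := mul_comm _ _
        omega
      obtain ⟨i, _, hi⟩ := Finset.exists_ne_zero_of_sum_ne_zero (hS1 ▸ one_ne_zero)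
      have hiz : z i ≠ 0 := by intro h0; rw [h0, mul_zero] at hi; exact hi rfl
      have hiv : w - (i : ℕ) ≠ 0 := by intro h0; rw [h0, zero_mul] at hi; exact hi rfl
      rcases eq_or_ne (w - (i : ℕ)) 1 with h1 | h1
      · have : (i : ℕ) = w - 1 := by have := i.isLt; omega
        exact hiz (hz i (by simpa using this))
      · have t1 : 2 ≤ (w - (i : ℕ)) * z i := by
          have := Nat.mul_le_mul (show 2 ≤ w - (i : ℕ) by omega) (show 1 ≤ z i by omega)
          simpa using this
        have t2 : (w - (i : ℕ)) * z i ≤ 1 :=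
          le_trans (Finset.single_le_sum
            (f := fun i : Fin (w+1) => (w - (i : ℕ)) * z i) (fun _ _ => Nat.zero_le _)
            (Finset.mem_univ i)) (le_of_eq hS1)
        omega
  · rintro ⟨L, m, rfl, hn, hmle, hm1⟩
    obtain ⟨z, h1, h2, h3⟩ := realize_w w hw L m hmle hm1
    refine ⟨z, fun i hi => h1 i (by simpa using hi), ?_, ?_⟩
    · rw [sum_split, h2, h3]; exact hn
    · rw [show (∑ i : Fin (w+1), (z i : ℤ)) = ((∑ i : Fin (w+1), z i : ℕ) : ℤ) by push_cast; rfl, h2]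

def Set1 (a d w : ℕ) (P Q : ℤ) : Set ℤ :=
  {ℓ | ∃ t : ℤ, 0 ≤ t ∧ Q + t * ((a:ℤ) + w * d) ≤ P * w ∧ ¬(t = 0 ∧ Q = 1) ∧ ℓ = P - t * d}

def SetW (a d w : ℕ) (P Q : ℤ) : Set ℤ :=
  {ℓ | ∃ t : ℤ, 0 ≤ t ∧ Q + t * ((a:ℤ) + w * d) ≤ P * w ∧
    P * w - Q - t * ((a:ℤ) + w * d) ≠ 1 ∧ ℓ = P - t * d}

section
variable (a d w : ℕ) (hgcd : Nat.gcd a d = 1) (hw : 3 ≤ w) (hwa : w < a)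

lemma hd1 (hgcd : Nat.gcd a d = 1) (hw : 3 ≤ w) (hwa : w < a) : 1 ≤ d := by
  rcases Nat.eq_zero_or_pos d with h | h
  · rw [h] at hgcd; simp at hgcd; omega
  · exact h

-- representation rigidity
lemma repr_rigid (hgcd : Nat.gcd a d = 1) (hw : 3 ≤ w) (hwa : w < a)
    (P Q : ℤ) (hQ0 : 0 ≤ Q) (hQa : Q < a) (L m : ℕ)
    (hn : P * a + Q * d = (L : ℤ) * a + (m : ℤ) * d) :
    ∃ t : ℤ, 0 ≤ t ∧ P - (L : ℤ) = d * t ∧ (m : ℤ) - Q = t * a := by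
  have hd : 1 ≤ d := hd1 a d w hgcd hw hwa
  have hdz : ((d : ℤ)) ≠ 0 := by positivity
  have ha4 : (4 : ℤ) ≤ (a : ℤ) := by exact_mod_cast (by omega : 4 ≤ a)
  have key : (P - L) * a = ((m : ℤ) - Q) * d := by linear_combination hn
  have hco : IsCoprime (d : ℤ) (a : ℤ) := by
    rw [Int.isCoprime_iff_gcd_eq_one, Int.gcd_natCast_natCast, Nat.gcd_comm]
    exact hgcd
  have hdvd : (d : ℤ) ∣ (P - L) := by
    refine hco.dvd_of_dvd_mul_right ⟨(m : ℤ) - Q, by linear_combination key⟩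
  obtain ⟨t, ht⟩ := hdvd
  have hma : (t : ℤ) * a = (m : ℤ) - Q := by
    have h2 : (d : ℤ) * (t * a) = d * ((m : ℤ) - Q) := by linear_combination key - a * ht
    exact mul_left_cancel₀ hdz h2
  have ht0 : 0 ≤ t := by
    by_contra hneg
    push_neg at hneg
    have : t ≤ -1 := by omega
    have h3 : t * a ≤ -1 * a := mul_le_mul_of_nonneg_right this (by positivity)
    have hm0 : (0 : ℤ) ≤ (m : ℤ) := by positivity
    linarith
  exact ⟨t, ht0, ht, hma.symm⟩

lemma alen1_eq (hgcd : Nat.gcd a d = 1) (hw : 3 ≤ w) (hwa : w < a)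
    (P Q : ℤ) (hP : 0 ≤ P) (hQ0 : 0 ≤ Q) (hQa : Q < a) :
    ALen a d w {1} (P * a + Q * d) = Set1 a d w P Q := by
  have hd : 1 ≤ d := hd1 a d w hgcd hw hwa
  have hdz : (0 : ℤ) < d := by positivity
  have ha4 : (4 : ℤ) ≤ (a : ℤ) := by exact_mod_cast (by omega : 4 ≤ a)
  have hw0 : (0 : ℤ) < (w : ℤ) := by positivity
  ext ℓ
  rw [mem_alen1 a d w hw]
  simp only [Set1, Set.mem_setOf_eq]
  constructor
  · rintro ⟨L, m, rfl, hn, hmle, hm1⟩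
    obtain ⟨t, ht0, ht, hma⟩ := repr_rigid a d w hgcd hw hwa P Q hQ0 hQa L m hn
    refine ⟨t, ht0, ?_, ?_, by linear_combination -ht⟩
    · have h1 : (m : ℤ) ≤ (L : ℤ) * w := by exact_mod_cast hmle
      have e : Q + t * ((a:ℤ) + w * d) - P * w = (m : ℤ) - (L : ℤ) * w := by
        linear_combination -hma - (w : ℤ) * ht
      linarith
    · rintro ⟨rfl, hQ1⟩
      apply hm1
      have : (m : ℤ) = 1 := by linarith [hma]
      exact_mod_cast this
  · rintro ⟨t, ht0, hrange, hexc, rfl⟩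
    have k1 : (0 : ℤ) ≤ t * a := mul_nonneg ht0 (by positivity)
    have e : t * ((a:ℤ) + w * d) = t * a + t * d * w := by ring
    have htd : t * d ≤ P := by
      have h' : (t * d) * w ≤ P * w := by linarith
      exact le_of_mul_le_mul_right h' hw0
    set L : ℕ := (P - t * d).toNat with hL
    set m : ℕ := (Q + t * a).toNat with hm
    have hLc : (L : ℤ) = P - t * d := Int.toNat_of_nonneg (by linarith)
    have hmc : (m : ℤ) = Q + t * a := Int.toNat_of_nonneg (by linarith)
    refine ⟨L, m, by rw [hLc], by rw [hLc, hmc]; ring, ?_, ?_⟩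
    · have : (m : ℤ) ≤ (L : ℤ) * w := by
        rw [hLc, hmc]
        have e2 : (P - t * d) * (w : ℤ) = P * w - t * d * w := by ring
        linarith
      exact_mod_cast this
    · intro h
      have hm1 : (m : ℤ) = 1 := by exact_mod_cast h
      rcases eq_or_lt_of_le ht0 with h0 | h0
      · apply hexc
        refine ⟨h0.symm, ?_⟩
        rw [hmc, ← h0] at hm1
        linarith
      · have : (a : ℤ) ≤ t * a := le_mul_of_one_le_left (by positivity) (by omega)
        rw [hmc] at hm1
        linarith

lemma alenw_eq (hgcd : Nat.gcd a d = 1) (hw : 3 ≤ w) (hwa : w < a)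
    (P Q : ℤ) (hP : 0 ≤ P) (hQ0 : 0 ≤ Q) (hQa : Q < a) :
    ALen a d w {w - 1} (P * a + Q * d) = SetW a d w P Q := by
  have hd : 1 ≤ d := hd1 a d w hgcd hw hwa
  have hdz : (0 : ℤ) < d := by positivity
  have ha4 : (4 : ℤ) ≤ (a : ℤ) := by exact_mod_cast (by omega : 4 ≤ a)
  have hw0 : (0 : ℤ) < (w : ℤ) := by positivity
  ext ℓ
  rw [mem_alenw a d w hw]
  simp only [SetW, Set.mem_setOf_eq]
  constructor
  · rintro ⟨L, m, rfl, hn, hmle, hm1⟩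
    obtain ⟨t, ht0, ht, hma⟩ := repr_rigid a d w hgcd hw hwa P Q hQ0 hQa L m hn
    have h1 : (m : ℤ) ≤ (L : ℤ) * w := by exact_mod_cast hmle
    have e : Q + t * ((a:ℤ) + w * d) - P * w = (m : ℤ) - (L : ℤ) * w := by
      linear_combination -hma - (w : ℤ) * ht
    refine ⟨t, ht0, by linarith, ?_, by linear_combination -ht⟩
    · intro hbad
      apply hm1
      have hcast : ((L * w - m : ℕ) : ℤ) = (L : ℤ) * w - m := by
        push_cast [hmle]
        ring
      have : ((L * w - m : ℕ) : ℤ) = 1 := by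
        rw [hcast]
        linarith [e, hbad]
      exact_mod_cast this
  · rintro ⟨t, ht0, hrange, hexc, rfl⟩
    have k1 : (0 : ℤ) ≤ t * a := mul_nonneg ht0 (by positivity)
    have e : t * ((a:ℤ) + w * d) = t * a + t * d * w := by ring
    have htd : t * d ≤ P := by
      have h' : (t * d) * w ≤ P * w := by linarith
      exact le_of_mul_le_mul_right h' hw0
    set L : ℕ := (P - t * d).toNat with hL
    set m : ℕ := (Q + t * a).toNat with hm
    have hLc : (L : ℤ) = P - t * d := Int.toNat_of_nonneg (by linarith)
    have hmc : (m : ℤ) = Q + t * a := Int.toNat_of_nonneg (by linarith)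
    have hmle : m ≤ L * w := by
      have : (m : ℤ) ≤ (L : ℤ) * w := by
        rw [hLc, hmc]
        have e2 : (P - t * d) * (w : ℤ) = P * w - t * d * w := by ring
        linarith
      exact_mod_cast this
    refine ⟨L, m, by rw [hLc], by rw [hLc, hmc]; ring, hmle, ?_⟩
    · intro h
      apply hexc
      have hcast : ((L * w - m : ℕ) : ℤ) = (L : ℤ) * w - m := by
        push_cast [hmle]
        ring
      have h1 : (L : ℤ) * w - m = 1 := by
        rw [← hcast, h]; norm_num
      rw [hLc, hmc] at h1
      linarith
end

section
variable (a d w : ℕ)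

lemma push1 (hw : 3 ≤ w) (hwa : w < a) (hd : 1 ≤ d)
    (P Q : ℤ) (hP : 0 ≤ P) (hQ0 : 0 ≤ Q) (hQa : Q < a)
    (hne : (Set1 a d w P Q).Nonempty) :
    ∃ P' Q' : ℤ, 0 ≤ P' ∧ 0 ≤ Q' ∧ Q' < a ∧ Set1 a d w P Q = SetW a d w P' Q' := by
  have ha4 : (4:ℤ) ≤ (a:ℤ) := by exact_mod_cast (by omega : 4 ≤ a)
  have hw3 : (3:ℤ) ≤ (w:ℤ) := by exact_mod_cast hw
  have hd1 : (1:ℤ) ≤ (d:ℤ) := by exact_mod_cast hd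
  have hwd3 : (3:ℤ) ≤ (w:ℤ) * d := by nlinarith
  have hwd : (w:ℤ) * d = (d:ℤ) * w := mul_comm _ _
  obtain ⟨c, hcdef⟩ : ∃ c : ℤ, (a:ℤ) + (w:ℤ) * (d:ℤ) = c := ⟨_, rfl⟩
  have hc0 : 0 < c := by linarith
  have hc7 : 7 ≤ c := by linarith
  have hdwc : (d:ℤ) * w ≤ c - 4 := by linarith
  have hmono : ∀ x y : ℤ, x ≤ y → x * c ≤ y * c :=
    fun x y h => mul_le_mul_of_nonneg_right h (le_of_lt hc0)
  obtain ⟨T, R, hTR, hR0, hRc⟩ : ∃ T R : ℤ, P * w - Q = T * c + R ∧ 0 ≤ R ∧ R < c := by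
    refine ⟨(P * w - Q) / c, (P * w - Q) % c, ?_, Int.emod_nonneg _ (ne_of_gt hc0),
      Int.emod_lt_of_pos _ hc0⟩
    have := Int.mul_ediv_add_emod (P * w - Q) c
    have hcm : c * ((P * w - Q) / c) = ((P * w - Q) / c) * c := mul_comm _ _
    linarith
  rcases eq_or_ne Q 1 with hQ1 | hQ1
  · -- Q = 1 case, need nonemptiness
    obtain ⟨ℓ0, t0, ht00, ht0r, ht0e, _⟩ := hne
    rw [hcdef] at ht0r
    have ht01 : 1 ≤ t0 := by
      rcases eq_or_ne t0 0 with h | h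
      · exact absurd ⟨h, hQ1⟩ ht0e
      · omega
    have hT1 : 1 ≤ T := by
      have h1 : t0 * c ≤ T * c + R := by linarith
      have := (step c T t0 R hc0 hR0 hRc).mp h1
      omega
    have hPwc : 1 + c ≤ P * w := by
      have h1 : c ≤ t0 * c := le_mul_of_one_le_left (le_of_lt hc0) ht01
      linarith
    have hPd : 0 ≤ P - d := by
      by_contra h
      push_neg at h
      have h2 : (P - d) * w < 0 := mul_neg_of_neg_of_pos (by linarith) (by linarith)
      have h3 : (P - d) * w = P * w - d * w := by ring
      linarith
    have hPwTR : P * w = T * c + R + 1 := by linarith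
    rcases le_or_gt ((d:ℤ) * w) R with hRdw | hRdw
    · -- Q' = R - d*w
      refine ⟨P - d, R - d * w, hPd, by linarith, by linarith, ?_⟩
      have hkey : (P - d) * w - (R - d * w) = T * c + 1 := by
        have : (P - d) * w = P * w - d * w := by ring
        linarith
      ext ℓ
      simp only [Set1, SetW, Set.mem_setOf_eq, hcdef]
      constructor
      · rintro ⟨t, ht0, hr, hex, rfl⟩
        have ht1 : 1 ≤ t := by
          rcases eq_or_ne t 0 with h | h
          · exact absurd ⟨h, hQ1⟩ hex
          · omega
        have htT : t ≤ T := (step c T t R hc0 hR0 hRc).mp (by linarith)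
        refine ⟨t - 1, by omega, ?_, ?_, by ring⟩
        · have := hmono (t - 1) T (by omega)
          linarith
        · intro hbad
          have hzero : (T - (t - 1)) * c = 0 := by
            have hexp : (T - (t - 1)) * c = T * c - (t - 1) * c := by ring
            linarith
          have := mul_eq_zero.mp hzero
          rcases this with h | h
          · omega
          · exact absurd h (ne_of_gt hc0)
      · rintro ⟨s, hs0, hr, hex, rfl⟩
        have hsT : s ≤ T := (step c T s 1 hc0 (by norm_num) (by linarith)).mp (by linarith)
        have hsT' : s ≤ T - 1 := by
          rcases eq_or_ne s T with h | h
          · exfalso; apply hex; rw [h]; linarith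
          · omega
        refine ⟨s + 1, by omega, ?_, by rintro ⟨h, _⟩; omega, by ring⟩
        · have := hmono (s + 1) T (by omega)
          linarith
    · -- Q' = a - 1
      refine ⟨P - d, (a:ℤ) - 1, hPd, by linarith, by linarith, ?_⟩
      have hkey : (P - d) * w - ((a:ℤ) - 1) = (T - 1) * c + (R + 2) := by
        have h1 : (P - d) * w = P * w - d * w := by ring
        have h2 : (T - 1) * c = T * c - c := by ring
        linarith
      have hk2 : R + 2 < c := by linarith
      ext ℓ
      simp only [Set1, SetW, Set.mem_setOf_eq, hcdef]
      constructor
      · rintro ⟨t, ht0, hr, hex, rfl⟩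
        have ht1 : 1 ≤ t := by
          rcases eq_or_ne t 0 with h | h
          · exact absurd ⟨h, hQ1⟩ hex
          · omega
        have htT : t ≤ T := (step c T t R hc0 hR0 hRc).mp (by linarith)
        refine ⟨t - 1, by omega, ?_, ?_, by ring⟩
        · have := hmono (t - 1) (T - 1) (by omega)
          linarith
        · intro hbad
          have hprod : ((t - 1) - (T - 1)) * c = R + 1 := by
            have hexp : ((t - 1) - (T - 1)) * c = (t - 1) * c - (T - 1) * c := by ring
            linarith
          exact nosmall c ((t - 1) - (T - 1)) (R + 1) hc0 (by linarith) (by linarith) hprod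
      · rintro ⟨s, hs0, hr, hex, rfl⟩
        have hsT : s ≤ T - 1 := (step c (T - 1) s (R + 2) hc0 (by linarith) hk2).mp (by linarith)
        refine ⟨s + 1, by omega, ?_, by rintro ⟨h, _⟩; omega, by ring⟩
        · have := hmono (s + 1) T (by omega)
          linarith
  · -- Q ≠ 1
    rcases eq_or_ne R 1 with hR1 | hR1
    · -- shift Q
      rcases eq_or_ne Q 0 with hQz | hQz
      · -- Q' = 1
        refine ⟨P, 1, hP, by norm_num, by linarith, ?_⟩
        have hPw : P * w = T * c + 1 := by rw [hQz] at hTR; linarith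
        ext ℓ
        simp only [Set1, SetW, Set.mem_setOf_eq, hcdef]
        constructor
        · rintro ⟨t, ht0, hr, _, rfl⟩
          have htT : t ≤ T := (step c T t 1 hc0 (by norm_num) (by linarith)).mp (by linarith [hr, hQz])
          refine ⟨t, ht0, ?_, ?_, rfl⟩
          · have := hmono t T htT; linarith
          · intro hbad
            have hprod : (T - t) * c = 1 := by
              have hexp : (T - t) * c = T * c - t * c := by ring
              linarith
            exact nosmall c (T - t) 1 hc0 (by norm_num) (by linarith) hprod
        · rintro ⟨t, ht0, hr, hex, rfl⟩
          have htT : t ≤ T := (step c T t 0 hc0 (by norm_num) (by linarith)).mp (by linarith)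
          refine ⟨t, ht0, ?_, by rintro ⟨_, h⟩; omega, rfl⟩
          have := hmono t T htT; rw [hQz]; linarith
      · -- Q ≥ 2, Q' = Q - 1
        refine ⟨P, Q - 1, hP, by omega, by linarith, ?_⟩
        have hPw : P * w = T * c + 1 + Q := by linarith
        ext ℓ
        simp only [Set1, SetW, Set.mem_setOf_eq, hcdef]
        constructor
        · rintro ⟨t, ht0, hr, _, rfl⟩
          have htT : t ≤ T := (step c T t 1 hc0 (by norm_num) (by linarith)).mp (by linarith)
          refine ⟨t, ht0, by linarith, ?_, rfl⟩
          intro hbad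
          have hprod : (t - T) * c = 1 := by
            have hexp : (t - T) * c = t * c - T * c := by ring
            linarith
          exact nosmall c (t - T) 1 hc0 (by norm_num) (by linarith) hprod
        · rintro ⟨t, ht0, hr, hex, rfl⟩
          have htT : t ≤ T := (step c T t 2 hc0 (by norm_num) (by linarith)).mp (by linarith)
          refine ⟨t, ht0, ?_, by rintro ⟨_, h⟩; omega, rfl⟩
          have := hmono t T htT; linarith
    · -- R ≠ 1 : identity
      refine ⟨P, Q, hP, hQ0, hQa, ?_⟩
      have hPw : P * w = T * c + R + Q := by linarith
      ext ℓ
      simp only [Set1, SetW, Set.mem_setOf_eq, hcdef]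
      constructor
      · rintro ⟨t, ht0, hr, _, rfl⟩
        refine ⟨t, ht0, hr, ?_, rfl⟩
        intro hbad
        rcases eq_or_ne R 0 with h0 | h0
        · have hprod : (T - t) * c = 1 := by
            have hexp : (T - t) * c = T * c - t * c := by ring
            linarith
          exact nosmall c (T - t) 1 hc0 (by norm_num) (by linarith) hprod
        · have hprod : (t - T) * c = R - 1 := by
            have hexp : (t - T) * c = t * c - T * c := by ring
            linarith
          exact nosmall c (t - T) (R - 1) hc0 (by omega) (by linarith) hprod
      · rintro ⟨t, ht0, hr, hex, rfl⟩
        exact ⟨t, ht0, hr, by rintro ⟨_, h⟩; omega, rfl⟩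

lemma push2 (hw : 3 ≤ w) (hwa : w < a) (hd : 1 ≤ d)
    (P Q : ℤ) (hP : 0 ≤ P) (hQ0 : 0 ≤ Q) (hQa : Q < a) :
    ∃ P' Q' : ℤ, 0 ≤ P' ∧ 0 ≤ Q' ∧ Q' < a ∧ Set1 a d w P' Q' = SetW a d w P Q := by
  have ha4 : (4:ℤ) ≤ (a:ℤ) := by exact_mod_cast (by omega : 4 ≤ a)
  have hw3 : (3:ℤ) ≤ (w:ℤ) := by exact_mod_cast hw
  have hd1 : (1:ℤ) ≤ (d:ℤ) := by exact_mod_cast hd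
  have hwd3 : (3:ℤ) ≤ (w:ℤ) * d := by nlinarith
  have hwd : (w:ℤ) * d = (d:ℤ) * w := mul_comm _ _
  obtain ⟨c, hcdef⟩ : ∃ c : ℤ, (a:ℤ) + (w:ℤ) * (d:ℤ) = c := ⟨_, rfl⟩
  have hc0 : 0 < c := by linarith
  have hc7 : 7 ≤ c := by linarith
  have hdwc : (d:ℤ) * w ≤ c - 4 := by linarith
  have hmono : ∀ x y : ℤ, x ≤ y → x * c ≤ y * c :=
    fun x y h => mul_le_mul_of_nonneg_right h (le_of_lt hc0)
  obtain ⟨T, R, hTR, hR0, hRc⟩ : ∃ T R : ℤ, P * w - Q = T * c + R ∧ 0 ≤ R ∧ R < c := by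
    refine ⟨(P * w - Q) / c, (P * w - Q) % c, ?_, Int.emod_nonneg _ (ne_of_gt hc0),
      Int.emod_lt_of_pos _ hc0⟩
    have := Int.mul_ediv_add_emod (P * w - Q) c
    have hcm : c * ((P * w - Q) / c) = ((P * w - Q) / c) * c := mul_comm _ _
    linarith
  have hPw : P * w = T * c + R + Q := by linarith
  rcases eq_or_ne R 1 with hR1 | hR1
  · -- R = 1 : (P + d, 1)
    refine ⟨P + d, 1, by linarith, by norm_num, by linarith, ?_⟩
    have hkey : (P + d) * w - 1 = T * c + (Q + d * w) := by
      have : (P + d) * w = P * w + d * w := by ring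
      linarith
    have hQdw : Q + (d:ℤ) * w < c := by linarith
    ext ℓ
    simp only [Set1, SetW, Set.mem_setOf_eq, hcdef]
    constructor
    · rintro ⟨s, hs0, hr, hex, rfl⟩
      have hs1 : 1 ≤ s := by
        rcases eq_or_ne s 0 with h | h
        · subst h; simp at hex
        · omega
      have hsT : s ≤ T := (step c T s (Q + d * w) hc0 (by linarith) hQdw).mp (by linarith)
      refine ⟨s - 1, by omega, ?_, ?_, by ring⟩
      · have := hmono (s - 1) T (by omega)
        linarith
      · intro hbad
        -- P*w - Q - (s-1)*c = 1 gives (T - (s-1))*c = 0 → s - 1 = T, but also from hbad..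
        -- P*w - Q = T*c + 1, so T*c - (s-1)*c = 0
        have hzero : (T - (s - 1)) * c = 0 := by
          have hexp : (T - (s - 1)) * c = T * c - (s - 1) * c := by ring
          linarith
        rcases mul_eq_zero.mp hzero with h | h
        · -- s - 1 = T: then s = T + 1 ≤ T contradiction
          omega
        · exact absurd h (ne_of_gt hc0)
    · rintro ⟨t, ht0, hr, hex, rfl⟩
      have htT : t ≤ T := (step c T t 1 hc0 (by norm_num) (by linarith)).mp (by linarith)
      have htT' : t ≤ T - 1 := by
        rcases eq_or_ne t T with h | h
        · exfalso; apply hex; rw [h]; linarith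
        · omega
      refine ⟨t + 1, by omega, ?_, by rintro ⟨h, _⟩; omega, by ring⟩
      have := hmono (t + 1) T (by omega)
      linarith
  · -- R ≠ 1
    rcases eq_or_ne Q 1 with hQ1 | hQ1
    · rcases eq_or_ne R 0 with hR0' | hR0'
      · -- (P, 0)
        refine ⟨P, 0, hP, le_refl 0, by linarith, ?_⟩
        ext ℓ
        simp only [Set1, SetW, Set.mem_setOf_eq, hcdef]
        constructor
        · rintro ⟨t, ht0, hr, _, rfl⟩
          have htT : t ≤ T := (step c T t 1 hc0 (by norm_num) (by linarith)).mp (by linarith)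
          refine ⟨t, ht0, by linarith [hmono t T htT], ?_, rfl⟩
          intro hbad
          have hprod : (T - t) * c = 1 := by
            have hexp : (T - t) * c = T * c - t * c := by ring
            linarith
          exact nosmall c (T - t) 1 hc0 (by norm_num) (by linarith) hprod
        · rintro ⟨t, ht0, hr, hex, rfl⟩
          have htT : t ≤ T := (step c T t 0 hc0 (le_refl 0) (by linarith)).mp (by linarith)
          exact ⟨t, ht0, by linarith [hmono t T htT], by rintro ⟨_, h⟩; omega, rfl⟩
      · -- R ≥ 2 : (P, 2)
        refine ⟨P, 2, hP, by norm_num, by linarith, ?_⟩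
        ext ℓ
        simp only [Set1, SetW, Set.mem_setOf_eq, hcdef]
        constructor
        · rintro ⟨t, ht0, hr, _, rfl⟩
          have htT : t ≤ T := (step c T t (R - 1) hc0 (by omega) (by linarith)).mp (by linarith)
          refine ⟨t, ht0, by linarith [hmono t T htT], ?_, rfl⟩
          intro hbad
          have hprod : (t - T) * c = R - 1 := by
            have hexp : (t - T) * c = t * c - T * c := by ring
            linarith
          exact nosmall c (t - T) (R - 1) hc0 (by omega) (by linarith) hprod
        · rintro ⟨t, ht0, hr, hex, rfl⟩
          have hR2 : 2 ≤ R := by omega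
          have htT : t ≤ T := (step c T t R hc0 hR0 hRc).mp (by linarith)
          exact ⟨t, ht0, by linarith [hmono t T htT], by rintro ⟨_, h⟩; omega, rfl⟩
    · -- identity
      refine ⟨P, Q, hP, hQ0, hQa, ?_⟩
      ext ℓ
      simp only [Set1, SetW, Set.mem_setOf_eq, hcdef]
      constructor
      · rintro ⟨t, ht0, hr, _, rfl⟩
        refine ⟨t, ht0, hr, ?_, rfl⟩
        intro hbad
        rcases eq_or_ne R 0 with h0 | h0
        · have hprod : (T - t) * c = 1 := by
            have hexp : (T - t) * c = T * c - t * c := by ring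
            linarith
          exact nosmall c (T - t) 1 hc0 (by norm_num) (by linarith) hprod
        · have hprod : (t - T) * c = R - 1 := by
            have hexp : (t - T) * c = t * c - T * c := by ring
            linarith
          exact nosmall c (t - T) (R - 1) hc0 (by omega) (by linarith) hprod
      · rintro ⟨t, ht0, hr, hex, rfl⟩
        exact ⟨t, ht0, hr, by rintro ⟨_, h⟩; omega, rfl⟩
end

lemma amem_iff (a d w : ℕ) (G : Set ℕ) (n : ℤ) :
    AMem a d w G n ↔ (ALen a d w G n).Nonempty := by
  constructor
  · rintro ⟨z, hz, hn⟩; exact ⟨∑ i : Fin (w+1), (z i : ℤ), z, hz, hn, rfl⟩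
  · rintro ⟨ℓ, z, hz, hn, _⟩; exact ⟨z, hz, hn⟩


theorem stmt18 (a d w : ℕ) (hgcd : Nat.gcd a d = 1) (hw2 : 2 < w) (hwa : w < a) :
    ALenSets a d w {1} = ALenSets a d w {w - 1} := by
  have hw : 3 ≤ w := hw2
  have hd : 1 ≤ d := hd1 a d w hgcd hw hwa
  have ha0 : (0:ℤ) < (a:ℤ) := by exact_mod_cast (by omega : 0 < a)
  have hd0 : (0:ℤ) ≤ (d:ℤ) := by positivity
  ext S
  simp only [ALenSets, Set.mem_setOf_eq]
  constructor
  · rintro ⟨n, hmem, rfl⟩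
    have hne : (ALen a d w {1} n).Nonempty := (amem_iff a d w _ n).mp hmem
    obtain ⟨ℓ0, hℓ0⟩ := hne
    obtain ⟨L, m, _, hn, _, _⟩ := (mem_alen1 a d w hw n ℓ0).mp hℓ0
    -- canonicalize
    obtain ⟨k, Q, hk0, hQ0, hQa, hm⟩ : ∃ k Q : ℤ, 0 ≤ k ∧ 0 ≤ Q ∧ Q < (a:ℤ) ∧
        (m : ℤ) = (a:ℤ) * k + Q := by
      refine ⟨(m:ℤ) / a, (m:ℤ) % a, Int.ediv_nonneg (by positivity) (le_of_lt ha0),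
        Int.emod_nonneg _ (ne_of_gt ha0), Int.emod_lt_of_pos _ ha0,
        (Int.mul_ediv_add_emod _ _).symm⟩
    set P : ℤ := (L : ℤ) + k * d with hPdef
    have hP0 : 0 ≤ P := by positivity
    have hneq : n = P * a + Q * d := by
      rw [hn, hPdef]
      linear_combination (d:ℤ) * hm
    have hA : ALen a d w {1} n = Set1 a d w P Q := by
      rw [hneq]; exact alen1_eq a d w hgcd hw hwa P Q hP0 hQ0 hQa
    have hne1 : (Set1 a d w P Q).Nonempty := ⟨ℓ0, hA ▸ hℓ0⟩
    obtain ⟨P', Q', hP', hQ'0, hQ'a, hEq⟩ := push1 a d w hw hwa hd P Q hP0 hQ0 hQa hne1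
    have hW : ALen a d w {w - 1} (P' * a + Q' * d) = SetW a d w P' Q' :=
      alenw_eq a d w hgcd hw hwa P' Q' hP' hQ'0 hQ'a
    refine ⟨P' * a + Q' * d, ?_, ?_⟩
    · rw [amem_iff, hW, ← hEq]
      exact hne1
    · rw [hA, hEq, hW]
  · rintro ⟨n, hmem, rfl⟩
    have hne : (ALen a d w {w - 1} n).Nonempty := (amem_iff a d w _ n).mp hmem
    obtain ⟨ℓ0, hℓ0⟩ := hne
    obtain ⟨L, m, _, hn, _, _⟩ := (mem_alenw a d w hw n ℓ0).mp hℓ0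
    obtain ⟨k, Q, hk0, hQ0, hQa, hm⟩ : ∃ k Q : ℤ, 0 ≤ k ∧ 0 ≤ Q ∧ Q < (a:ℤ) ∧
        (m : ℤ) = (a:ℤ) * k + Q := by
      refine ⟨(m:ℤ) / a, (m:ℤ) % a, Int.ediv_nonneg (by positivity) (le_of_lt ha0),
        Int.emod_nonneg _ (ne_of_gt ha0), Int.emod_lt_of_pos _ ha0,
        (Int.mul_ediv_add_emod _ _).symm⟩
    set P : ℤ := (L : ℤ) + k * d with hPdef
    have hP0 : 0 ≤ P := by positivity
    have hneq : n = P * a + Q * d := by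
      rw [hn, hPdef]
      linear_combination (d:ℤ) * hm
    have hA : ALen a d w {w - 1} n = SetW a d w P Q := by
      rw [hneq]; exact alenw_eq a d w hgcd hw hwa P Q hP0 hQ0 hQa
    obtain ⟨P', Q', hP', hQ'0, hQ'a, hEq⟩ := push2 a d w hw hwa hd P Q hP0 hQ0 hQa
    have h1 : ALen a d w {1} (P' * a + Q' * d) = Set1 a d w P' Q' :=
      alen1_eq a d w hgcd hw hwa P' Q' hP' hQ'0 hQ'a
    refine ⟨P' * a + Q' * d, ?_, ?_⟩
    · rw [amem_iff, h1, hEq]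
      exact ⟨ℓ0, hA ▸ hℓ0⟩
    · rw [hA, ← hEq, h1]
end
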